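/- Generator comparison bound (key estimate in the proof of Theorem 1, including the unbounded-jump case): Let d ≥ 1, β ∈ (0,1], let P be a stochastic matrix on ℤ^d, and let x ∈ ℤ^d be such that Σ_y P(x,y)‖y−x‖² < ∞; let μ(x) and σ²(x) be the drift and diffusion matrix of P at x. Let f : ℝ^d → ℝ be twice continuously differentiable with Σ_y P(x,y)|f(y)| < ∞ and S := Σ_y P(x,y) ‖y−x‖^{2+β} [D²f]_{β, B̄(x,‖y−x‖)} < ∞. Then | Σ_y P(x,y)(f(y) − f(x)) − μ(x)·Df(x) − (1/2)·trace(σ²(x)·D²f(x)) | ≤ S/2. In particular, if P has jumps bounded by a real number 𝔧 ≥ 1, then the left-hand side is at most 𝔧^{2+β} [D²f]_{β, B̄(x,𝔧)}. -/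

import Mathlib

open scoped ENNReal BigOperators

noncomputable section

/-- `ℤ^d` represented as functions `Fin d → ℤ`. -/
abbrev Zd (d : ℕ) := Fin d → ℤ

/-- The embedding of `ℤ^d` into Euclidean `ℝ^d`. -/
def zToR {d : ℕ} (x : Zd d) : EuclideanSpace ℝ (Fin d) := WithLp.toLp 2 (fun i => (x i : ℝ))

/-- Entry `(i, j)` of the Hessian of `f` at `x`. -/
def hessianEntry {d : ℕ} (f : EuclideanSpace ℝ (Fin d) → ℝ)
    (x : EuclideanSpace ℝ (Fin d)) (i j : Fin d) : ℝ :=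
  iteratedFDeriv ℝ 2 f x ![EuclideanSpace.single i 1, EuclideanSpace.single j 1]

/-- The Hölder seminorm `[D²f]_{β,Ω}` of the Hessian of `f` over `Ω`, in `[0,∞]`. -/
def hessHolder {d : ℕ} (β : ℝ) (f : EuclideanSpace ℝ (Fin d) → ℝ)
    (Ω : Set (EuclideanSpace ℝ (Fin d))) : ℝ≥0∞ :=
  ⨆ (y : Ω) (z : Ω) (_ : (y : EuclideanSpace ℝ (Fin d)) ≠ (z : EuclideanSpace ℝ (Fin d))),
    ENNReal.ofReal
      (‖iteratedFDeriv ℝ 2 f (y : EuclideanSpace ℝ (Fin d)) -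
          iteratedFDeriv ℝ 2 f (z : EuclideanSpace ℝ (Fin d))‖ /
        ‖(y : EuclideanSpace ℝ (Fin d)) - (z : EuclideanSpace ℝ (Fin d))‖ ^ β)

/-!
A second-order Taylor expansion of `f` around `x` with the Hölder modulus of `D²f` on
`B̄(x, ‖h‖)` leaves a remainder of size at most `½ [D²f]_{β, B̄(x,‖h‖)} ‖h‖^{2+β}`. Averaging
this expansion over the jump `h = y - x` under `P(x, ·)`, the first- and second-order terms
average to `Df(x) μ(x)` and `½ tr(σ²(x) D²f(x))`, so the generator differs from them by at most
the average of the remainders, which is `S / 2`. For jumps bounded by `𝔧`, every ball lies in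
`B̄(x, 𝔧)` and `P(x, ·)` has total mass one.
-/

open Metric Set

section Taylor

variable {E : Type*} [NormedAddCommGroup E] [NormedSpace ℝ E]

noncomputable def secondOrderRemainder (f : E → ℝ) (x h : E) : ℝ :=
  f (x + h) - f x - fderiv ℝ f x h - 1 / 2 * iteratedFDeriv ℝ 2 f x ![h, h]

/-- Two applications of the fencing lemma: `|g' t - g' 0 - t g'' 0| ≤ K t`, and then
`|g t - g 0 - t g' 0 - t² g'' 0 / 2| ≤ K t² / 2`. -/
theorem abs_taylor_two_le_of_deriv2_sub_le {g g' g'' : ℝ → ℝ} {K : ℝ}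
    (hg : ∀ t, HasDerivAt g (g' t) t) (hg' : ∀ t, HasDerivAt g' (g'' t) t)
    (hK : ∀ t ∈ Icc (0 : ℝ) 1, |g'' t - g'' 0| ≤ K) :
    |g 1 - g 0 - g' 0 - g'' 0 / 2| ≤ K / 2 := by
  have hd' (t : ℝ) : HasDerivAt (fun t => g' t - g' 0 - t * g'' 0) (g'' t - g'' 0) t :=
    (((hg' t).sub_const _).sub ((hasDerivAt_id' t).mul_const (g'' 0))).congr_deriv (by ring)
  have hd (t : ℝ) : HasDerivAt (fun t => g t - g 0 - t * g' 0 - t ^ 2 / 2 * g'' 0)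
      (g' t - g' 0 - t * g'' 0) t :=
    ((((hg t).sub_const _).sub ((hasDerivAt_id' t).mul_const _)).sub
      (((hasDerivAt_pow 2 t).div_const 2).mul_const (g'' 0))).congr_deriv (by ring)
  have hderiv_bound : ∀ t ∈ Icc (0 : ℝ) 1, ‖g' t - g' 0 - t * g'' 0‖ ≤ K * t :=
    image_norm_le_of_norm_deriv_right_le_deriv_boundary (B' := fun _ => K)
      (fun t _ => (hd' t).continuousAt.continuousWithinAt) (fun t _ => (hd' t).hasDerivWithinAt)
      (by simp) (fun t => ((hasDerivAt_id' t).const_mul K).congr_deriv (by ring))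
      (fun t ht => hK t (Ico_subset_Icc_self ht))
  have hbound : ∀ t ∈ Icc (0 : ℝ) 1,
      ‖g t - g 0 - t * g' 0 - t ^ 2 / 2 * g'' 0‖ ≤ K * t ^ 2 / 2 :=
    image_norm_le_of_norm_deriv_right_le_deriv_boundary (B' := fun t => K * t)
      (fun t _ => (hd t).continuousAt.continuousWithinAt) (fun t _ => (hd t).hasDerivWithinAt)
      (by simp) (fun t => (((hasDerivAt_pow 2 t).const_mul K).div_const 2).congr_deriv (by ring))
      (fun t ht => hderiv_bound t (Ico_subset_Icc_self ht))
  simpa [div_eq_inv_mul] using hbound 1 (right_mem_Icc.mpr zero_le_one)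

theorem abs_secondOrderRemainder_le {f : E → ℝ} (hf : ContDiff ℝ 2 f) {x h : E} {β C : ℝ}
    (hβ : 0 ≤ β) (hC : 0 ≤ C)
    (hHolder : ∀ a ∈ closedBall x ‖h‖,
      ‖iteratedFDeriv ℝ 2 f a - iteratedFDeriv ℝ 2 f x‖ ≤ C * ‖a - x‖ ^ β) :
    |secondOrderRemainder f x h| ≤ C * ‖h‖ ^ (2 + β) / 2 := by
  have hDf : Differentiable ℝ f := hf.differentiable (by norm_num)
  have hD2f : Differentiable ℝ (fderiv ℝ f) :=
    (hf.fderiv_right (m := 1) (by norm_num)).differentiable (by norm_num)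
  have hline (t : ℝ) : HasDerivAt (fun s : ℝ => x + s • h) h t := by
    simpa using ((hasDerivAt_id t).smul_const h).const_add x
  have hg (t : ℝ) : HasDerivAt (fun s => f (x + s • h)) (fderiv ℝ f (x + t • h) h) t :=
    (hDf _).hasFDerivAt.comp_hasDerivAt t (hline t)
  have hg' (t : ℝ) : HasDerivAt (fun s => fderiv ℝ f (x + s • h) h)
      (iteratedFDeriv ℝ 2 f (x + t • h) ![h, h]) t := by
    rw [iteratedFDeriv_two_apply]
    exact ((ContinuousLinearMap.apply ℝ ℝ h).hasFDerivAt.comp _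
      (hD2f _).hasFDerivAt).comp_hasDerivAt t (hline t)
  have hK : ∀ t ∈ Icc (0 : ℝ) 1, |iteratedFDeriv ℝ 2 f (x + t • h) ![h, h] -
      iteratedFDeriv ℝ 2 f (x + (0 : ℝ) • h) ![h, h]| ≤ C * ‖h‖ ^ (2 + β) := by
    intro t ht
    have hnorm : ‖x + t • h - x‖ = t * ‖h‖ := by
      rw [add_sub_cancel_left, norm_smul, Real.norm_of_nonneg ht.1]
    have hth : t * ‖h‖ ≤ ‖h‖ := mul_le_of_le_one_left (norm_nonneg h) ht.2
    rw [zero_smul, add_zero, ← sub_apply]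
    calc _ ≤ ‖iteratedFDeriv ℝ 2 f (x + t • h) - iteratedFDeriv ℝ 2 f x‖ * ∏ i, ‖![h, h] i‖ :=
          ContinuousMultilinearMap.le_opNorm _ _
      _ ≤ C * ‖h‖ ^ β * (‖h‖ * ‖h‖) := by
          rw [Fin.prod_univ_two, Matrix.cons_val_zero, Matrix.cons_val_one, Matrix.cons_val_zero]
          gcongr
          refine (hHolder _ (by rwa [mem_closedBall, dist_eq_norm, hnorm])).trans ?_
          rw [hnorm]
          gcongr
          exact mul_nonneg ht.1 (norm_nonneg h)
      _ = C * ‖h‖ ^ (2 + β) := by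
          rw [Real.rpow_add' (norm_nonneg h) (by positivity), Real.rpow_two]
          ring
  convert abs_taylor_two_le_of_deriv2_sub_le hg hg' hK using 2
  simp [secondOrderRemainder, iteratedFDeriv_two_apply]
  ring

end Taylor

section Euclidean

variable {ι : Type*} [Fintype ι] [DecidableEq ι]

theorem ContinuousLinearMap.apply_eq_sum_smul_single {F : Type*} [NormedAddCommGroup F]
    [NormedSpace ℝ F] (L : EuclideanSpace ℝ ι →L[ℝ] F) (v : EuclideanSpace ℝ ι) :
    L v = ∑ i, v i • L (EuclideanSpace.single i 1) := by
  conv_lhs => rw [← (EuclideanSpace.basisFun ι ℝ).sum_repr v]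
  simp [map_sum]

variable {d : ℕ}

theorem iteratedFDeriv_two_apply_eq_sum_hessianEntry (f : EuclideanSpace ℝ (Fin d) → ℝ)
    (x v : EuclideanSpace ℝ (Fin d)) :
    iteratedFDeriv ℝ 2 f x ![v, v] = ∑ i, ∑ j, v i * v j * hessianEntry f x i j := by
  simp only [iteratedFDeriv_two_apply, hessianEntry, Matrix.cons_val_zero, Matrix.cons_val_one]
  conv_lhs => rw [ContinuousLinearMap.apply_eq_sum_smul_single (fderiv ℝ (fderiv ℝ f) x)]
  simp only [sum_apply, smul_apply, smul_eq_mul]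
  refine Finset.sum_congr rfl fun i _ => ?_
  rw [ContinuousLinearMap.apply_eq_sum_smul_single (fderiv ℝ (fderiv ℝ f) x _), Finset.mul_sum]
  simp only [smul_eq_mul, mul_assoc]

end Euclidean

theorem hessHolder_mono {d : ℕ} (β : ℝ) (f : EuclideanSpace ℝ (Fin d) → ℝ)
    {Ω₁ Ω₂ : Set (EuclideanSpace ℝ (Fin d))} (h : Ω₁ ⊆ Ω₂) :
    hessHolder β f Ω₁ ≤ hessHolder β f Ω₂ :=
  iSup_le fun y => iSup_le fun z => iSup_le fun hne =>
    le_iSup_of_le ⟨y, h y.2⟩ (le_iSup_of_le ⟨z, h z.2⟩ (le_iSup_of_le hne le_rfl))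

theorem norm_iteratedFDeriv_two_sub_le_hessHolder {d : ℕ} {β : ℝ}
    {f : EuclideanSpace ℝ (Fin d) → ℝ} {Ω : Set (EuclideanSpace ℝ (Fin d))}
    (hfin : hessHolder β f Ω ≠ ⊤) {a b : EuclideanSpace ℝ (Fin d)} (ha : a ∈ Ω) (hb : b ∈ Ω) :
    ‖iteratedFDeriv ℝ 2 f a - iteratedFDeriv ℝ 2 f b‖ ≤
      (hessHolder β f Ω).toReal * ‖a - b‖ ^ β := by
  rcases eq_or_ne a b with rfl | hne
  · rw [sub_self, norm_zero]
    positivity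
  have hpos : 0 < ‖a - b‖ ^ β := Real.rpow_pos_of_pos (norm_pos_iff.2 (sub_ne_zero.2 hne)) β
  rw [← div_le_iff₀ hpos, ← ENNReal.ofReal_le_iff_le_toReal hfin]
  exact le_iSup_of_le ⟨a, ha⟩ (le_iSup_of_le ⟨b, hb⟩ (le_iSup_of_le hne le_rfl))

section Generator

variable {ι : Type*} {d : ℕ} {p : ι → ℝ} {z : ι → EuclideanSpace ℝ (Fin d)}
  {x μ : EuclideanSpace ℝ (Fin d)} {σ2 : Matrix (Fin d) (Fin d) ℝ}
  {f : EuclideanSpace ℝ (Fin d) → ℝ} {β : ℝ}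

theorem hasSum_mul_apply_of_hasSum_coord (L : EuclideanSpace ℝ (Fin d) →L[ℝ] ℝ)
    (hμ : ∀ i, HasSum (fun y => p y * (z y - x) i) (μ i)) :
    HasSum (fun y => p y * L (z y - x)) (L μ) := by
  rw [L.apply_eq_sum_smul_single μ]
  refine (hasSum_sum fun i _ => (hμ i).mul_right (L (EuclideanSpace.single i 1))).congr_fun
    fun y => ?_
  rw [L.apply_eq_sum_smul_single, Finset.mul_sum]
  simp only [smul_eq_mul, mul_assoc]

theorem hasSum_mul_iteratedFDeriv_two
    (hσ2 : ∀ i j, HasSum (fun y => p y * ((z y - x) i * (z y - x) j)) (σ2 i j)) :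
    HasSum (fun y => p y * iteratedFDeriv ℝ 2 f x ![z y - x, z y - x])
      (∑ i, ∑ j, σ2 i j * hessianEntry f x i j) := by
  refine (hasSum_sum fun i _ => hasSum_sum fun j _ =>
    (hσ2 i j).mul_right (hessianEntry f x i j)).congr_fun fun y => ?_
  simp only [iteratedFDeriv_two_apply_eq_sum_hessianEntry, Finset.mul_sum, mul_assoc]

theorem hasSum_mul_secondOrderRemainder (hp0 : ∀ y, 0 ≤ p y) (hp : Summable p)
    (hfint : Summable fun y => p y * |f (z y)|)
    (hμ : ∀ i, HasSum (fun y => p y * (z y - x) i) (μ i))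
    (hσ2 : ∀ i j, HasSum (fun y => p y * ((z y - x) i * (z y - x) j)) (σ2 i j)) :
    HasSum (fun y => p y * secondOrderRemainder f x (z y - x))
      ((∑' y, p y * (f (z y) - f x)) - fderiv ℝ f x μ -
        (1 / 2) * ∑ i, ∑ j, σ2 i j * hessianEntry f x i j) := by
  have hpf : Summable fun y => p y * f (z y) :=
    summable_abs_iff.mp <| hfint.congr fun y => by rw [abs_mul, abs_of_nonneg (hp0 y)]
  have hincr : Summable fun y => p y * (f (z y) - f x) := by
    simpa only [mul_sub] using hpf.sub (hp.mul_right (f x))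
  refine ((hincr.hasSum.sub (hasSum_mul_apply_of_hasSum_coord _ hμ)).sub
    ((hasSum_mul_iteratedFDeriv_two (f := f) hσ2).mul_left (1 / 2))).congr_fun fun y => ?_
  simp only [secondOrderRemainder, add_sub_cancel]
  ring

theorem ofReal_abs_mul_secondOrderRemainder_le (hf : ContDiff ℝ 2 f) (hβ : 0 ≤ β) {q : ℝ}
    (hq : 0 ≤ q) (h : EuclideanSpace ℝ (Fin d)) :
    ENNReal.ofReal |q * secondOrderRemainder f x h| ≤
      ENNReal.ofReal q * (ENNReal.ofReal (‖h‖ ^ (2 + β)) *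
        hessHolder β f (closedBall x ‖h‖)) / 2 := by
  rcases eq_or_ne h 0 with rfl | hh
  · simp [secondOrderRemainder, iteratedFDeriv_two_apply]
  set H := hessHolder β f (closedBall x ‖h‖)
  rcases eq_or_ne H ⊤ with htop | hfin
  · rcases hq.eq_or_lt with rfl | hq
    · simp
    have hpow : 0 < ‖h‖ ^ (2 + β) := Real.rpow_pos_of_pos (norm_pos_iff.2 hh) _
    simp [htop, ENNReal.mul_top, hq, hpow, ENNReal.top_div]
  have hR := abs_secondOrderRemainder_le hf hβ ENNReal.toReal_nonneg fun a ha =>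
    norm_iteratedFDeriv_two_sub_le_hessHolder hfin ha (mem_closedBall_self (norm_nonneg h))
  calc ENNReal.ofReal |q * secondOrderRemainder f x h|
      = ENNReal.ofReal (q * |secondOrderRemainder f x h|) := by rw [abs_mul, abs_of_nonneg hq]
    _ ≤ ENNReal.ofReal (q * (‖h‖ ^ (2 + β) * H.toReal) / 2) := by
        refine ENNReal.ofReal_le_ofReal ?_
        rw [mul_div_assoc, mul_comm (‖h‖ ^ (2 + β))]
        gcongr
    _ = _ := by
        rw [ENNReal.ofReal_div_of_pos two_pos, ENNReal.ofReal_mul hq,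
          ENNReal.ofReal_mul (by positivity), ENNReal.ofReal_toReal hfin, ENNReal.ofReal_ofNat]

theorem ofReal_abs_generator_sub_le (hf : ContDiff ℝ 2 f) (hβ : 0 ≤ β) (hp0 : ∀ y, 0 ≤ p y)
    (hp : Summable p) (hfint : Summable fun y => p y * |f (z y)|)
    (hμ : ∀ i, HasSum (fun y => p y * (z y - x) i) (μ i))
    (hσ2 : ∀ i j, HasSum (fun y => p y * ((z y - x) i * (z y - x) j)) (σ2 i j)) :
    ENNReal.ofReal |(∑' y, p y * (f (z y) - f x)) - fderiv ℝ f x μ -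
        (1 / 2) * ∑ i, ∑ j, σ2 i j * hessianEntry f x i j| ≤
      (∑' y, ENNReal.ofReal (p y) * (ENNReal.ofReal (‖z y - x‖ ^ (2 + β)) *
        hessHolder β f (closedBall x ‖z y - x‖))) / 2 := by
  rw [← (hasSum_mul_secondOrderRemainder hp0 hp hfint hμ hσ2).tsum_eq, ← Real.enorm_eq_ofReal_abs,
    div_eq_mul_inv, ← ENNReal.tsum_mul_right]
  refine enorm_tsum_le_tsum_enorm.trans (ENNReal.tsum_le_tsum fun y => ?_)
  rw [Real.enorm_eq_ofReal_abs, ← div_eq_mul_inv]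
  exact ofReal_abs_mul_secondOrderRemainder_le hf hβ (hp0 y) _

theorem tsum_ofReal_mul_hessHolder_le_of_jumps_le (hβ : 0 ≤ β) (hp0 : ∀ y, 0 ≤ p y)
    (hp : HasSum p 1) {j : ℝ} (hjump : ∀ y, j < ‖z y - x‖ → p y = 0) :
    ∑' y, ENNReal.ofReal (p y) * (ENNReal.ofReal (‖z y - x‖ ^ (2 + β)) *
        hessHolder β f (closedBall x ‖z y - x‖)) ≤
      ENNReal.ofReal (j ^ (2 + β)) * hessHolder β f (closedBall x j) := by
  have hmass : ∑' y, ENNReal.ofReal (p y) = 1 := by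
    rw [← ENNReal.ofReal_tsum_of_nonneg hp0 hp.summable, hp.tsum_eq, ENNReal.ofReal_one]
  calc _ ≤ ∑' y, ENNReal.ofReal (p y) *
        (ENNReal.ofReal (j ^ (2 + β)) * hessHolder β f (closedBall x j)) := by
        refine ENNReal.tsum_le_tsum fun y => ?_
        rcases eq_or_ne (p y) 0 with hy | hy
        · simp [hy]
        have hle : ‖z y - x‖ ≤ j := not_lt.mp (mt (hjump y) hy)
        gcongr
        exact hessHolder_mono β f (closedBall_subset_closedBall hle)
    _ = _ := by rw [ENNReal.tsum_mul_right, hmass, one_mul]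

end Generator

theorem generator_comparison_bound_general
    (d : ℕ) (β : ℝ) (hβ0 : 0 < β)
    (P : Zd d → Zd d → ℝ)
    (hP0 : ∀ x y, 0 ≤ P x y) (hPsum : ∀ x, HasSum (P x) 1)
    (x : Zd d)
    (μx : EuclideanSpace ℝ (Fin d)) (σ2x : Matrix (Fin d) (Fin d) ℝ)
    (hμ : ∀ i, HasSum (fun y => P x y * (zToR y - zToR x) i) (μx i))
    (hσ2 : ∀ i j,
      HasSum (fun y => P x y * ((zToR y - zToR x) i * (zToR y - zToR x) j)) (σ2x i j))
    (f : EuclideanSpace ℝ (Fin d) → ℝ) (hf : ContDiff ℝ 2 f)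
    (hfint : Summable (fun y : Zd d => P x y * |f (zToR y)|))
    (S : ℝ≥0∞)
    (hS : S = ∑' y : Zd d, ENNReal.ofReal (P x y) *
        (ENNReal.ofReal (‖zToR y - zToR x‖ ^ (2 + β)) *
          hessHolder β f (Metric.closedBall (zToR x) ‖zToR y - zToR x‖)))
    (jmp : ℝ) :
    ENNReal.ofReal |(∑' y : Zd d, P x y * (f (zToR y) - f (zToR x))) -
        fderiv ℝ f (zToR x) μx -
        (1 / 2) * ∑ i, ∑ j, σ2x i j * hessianEntry f (zToR x) i j| ≤ S / 2 ∧
      ((∀ y, jmp < ‖zToR y - zToR x‖ → P x y = 0) →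
        ENNReal.ofReal |(∑' y : Zd d, P x y * (f (zToR y) - f (zToR x))) -
            fderiv ℝ f (zToR x) μx -
            (1 / 2) * ∑ i, ∑ j, σ2x i j * hessianEntry f (zToR x) i j| ≤
          ENNReal.ofReal (jmp ^ (2 + β)) *
            hessHolder β f (Metric.closedBall (zToR x) jmp)) := by
  subst hS
  have hbound := ofReal_abs_generator_sub_le hf hβ0.le (hP0 x) (hPsum x).summable hfint hμ hσ2
  exact ⟨hbound, fun hjump => hbound.trans <| ENNReal.half_le_self.trans <|
    tsum_ofReal_mul_hessHolder_le_of_jumps_le hβ0.le (hP0 x) (hPsum x) hjump⟩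

theorem generator_comparison_bound
    (d : ℕ) (hd : 1 ≤ d) (β : ℝ) (hβ0 : 0 < β) (hβ1 : β ≤ 1)
    (P : Zd d → Zd d → ℝ)
    (hP0 : ∀ x y, 0 ≤ P x y) (hPsum : ∀ x, HasSum (P x) 1)
    (x : Zd d)
    (hmom2 : Summable (fun y : Zd d => P x y * ‖zToR y - zToR x‖ ^ 2))
    (μx : EuclideanSpace ℝ (Fin d)) (σ2x : Matrix (Fin d) (Fin d) ℝ)
    (hμ : ∀ i, HasSum (fun y => P x y * (zToR y - zToR x) i) (μx i))
    (hσ2 : ∀ i j,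
      HasSum (fun y => P x y * ((zToR y - zToR x) i * (zToR y - zToR x) j)) (σ2x i j))
    (f : EuclideanSpace ℝ (Fin d) → ℝ) (hf : ContDiff ℝ 2 f)
    (hfint : Summable (fun y : Zd d => P x y * |f (zToR y)|))
    (S : ℝ≥0∞)
    (hS : S = ∑' y : Zd d, ENNReal.ofReal (P x y) *
        (ENNReal.ofReal (‖zToR y - zToR x‖ ^ (2 + β)) *
          hessHolder β f (Metric.closedBall (zToR x) ‖zToR y - zToR x‖)))
    (hSfin : S ≠ ⊤)
    (jmp : ℝ) (hjmp : 1 ≤ jmp) :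
    ENNReal.ofReal |(∑' y : Zd d, P x y * (f (zToR y) - f (zToR x))) -
        fderiv ℝ f (zToR x) μx -
        (1 / 2) * ∑ i, ∑ j, σ2x i j * hessianEntry f (zToR x) i j| ≤ S / 2 ∧
      ((∀ y, jmp < ‖zToR y - zToR x‖ → P x y = 0) →
        ENNReal.ofReal |(∑' y : Zd d, P x y * (f (zToR y) - f (zToR x))) -
            fderiv ℝ f (zToR x) μx -
            (1 / 2) * ∑ i, ∑ j, σ2x i j * hessianEntry f (zToR x) i j| ≤
          ENNReal.ofReal (jmp ^ (2 + β)) *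
            hessHolder β f (Metric.closedBall (zToR x) jmp)) :=
  generator_comparison_bound_general d β hβ0 P hP0 hPsum x μx σ2x hμ hσ2 f hf hfint S hS jmp
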